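/- arXiv:2001.05497 — 9 statements merged into one kernel-verified Lean document; each statement's English description precedes it below -/
import Mathlib

section
/- Let d ≥ 1 be an integer and let C be a finite set of n distinct points in ℝ^d with n > 24·d·log₂(d+1). Then there exists a point y ∈ C and real coefficients (a_x)_{x ∈ C∖{y}} such that Σ_{x ∈ C∖{y}} a_x = 1, Σ_{x ∈ C∖{y}} a_x·x = y, and Σ_{x ∈ C∖{y}} |a_x| ≤ d+1. -/
/-!
Any `d + 2` points of `ℝ^d` satisfy an affine dependence `∑ f x • x = 0`, `∑ f x = 0` with
`f ≠ 0`; replacing `f` by `-f` if necessary, at most half of the points get a positive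
coefficient. Solving the dependence for the point `y` with the largest coefficient gives
`y = ∑_{x ≠ y} (-f x / f y) • x`, and since `∑ |f x| = 2 ∑_{f x > 0} f x ≤ 2 #{f > 0} · f y`,
these coefficients have `ℓ¹`-norm at most `2 #{f > 0} - 1 ≤ d + 1`.
-/

open Finset Module

variable {𝕜 E : Type*} [Field 𝕜] [LinearOrder 𝕜] [IsStrictOrderedRing 𝕜]

theorem Finset.sum_abs_eq_two_mul_sum_pos {ι : Type*} {s : Finset ι} {f : ι → 𝕜}
    (hf : ∑ i ∈ s, f i = 0) : ∑ i ∈ s, |f i| = 2 * ∑ i ∈ s with 0 < f i, f i := by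
  have habs (x : 𝕜) : |x| = 2 * (if 0 < x then x else 0) - x := by
    split_ifs with hx
    · rw [abs_of_pos hx]; ring
    · rw [abs_of_nonpos (not_lt.mp hx)]; ring
  simp only [habs, sum_sub_distrib, hf, sub_zero, ← mul_sum, sum_filter]

variable [AddCommGroup E] [Module 𝕜 E]

def HasBoundedAffineRepr (s : Finset E) (y : E) (K : 𝕜) : Prop :=
  ∃ a : E → 𝕜, ∑ x ∈ s, a x = 1 ∧ ∑ x ∈ s, a x • x = y ∧ ∑ x ∈ s, |a x| ≤ K

namespace HasBoundedAffineRepr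

variable {s s' : Finset E} {y : E} {K K' : 𝕜}

omit [IsStrictOrderedRing 𝕜] in
theorem mono_bound (h : HasBoundedAffineRepr s y K) (hK : K ≤ K') :
    HasBoundedAffineRepr s y K' :=
  let ⟨a, hsum, hvec, hl1⟩ := h
  ⟨a, hsum, hvec, hl1.trans hK⟩

theorem mono [DecidableEq E] (h : HasBoundedAffineRepr s y K) (hss' : s ⊆ s') :
    HasBoundedAffineRepr s' y K := by
  obtain ⟨a, hsum, hvec, hl1⟩ := h
  have hs : s' ∩ s = s := inter_eq_right.mpr hss'
  refine ⟨fun x => if x ∈ s then a x else 0, ?_, ?_, ?_⟩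
  · rwa [sum_ite_mem, hs]
  · simp_rw [ite_smul, zero_smul]
    rwa [sum_ite_mem, hs]
  · simp_rw [apply_ite abs, abs_zero]
    rwa [sum_ite_mem, hs]

end HasBoundedAffineRepr

theorem hasBoundedAffineRepr_erase_of_relation [DecidableEq E] {t : Finset E} {f : E → 𝕜}
    (hvec : ∑ x ∈ t, f x • x = 0) (hsum : ∑ x ∈ t, f x = 0) {y : E} (hy : y ∈ t)
    (hfy : f y ≠ 0) :
    HasBoundedAffineRepr (t.erase y) y ((∑ x ∈ t, |f x| - |f y|) / |f y|) := by
  refine ⟨fun x => -(f y)⁻¹ * f x, ?_, ?_, ?_⟩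
  · rw [← mul_sum, sum_erase_eq_sub hy, hsum]
    field_simp
    ring
  · simp_rw [← smul_smul, ← smul_sum, sum_erase_eq_sub hy, hvec, zero_sub, smul_neg, neg_smul,
      neg_neg, smul_smul, inv_mul_cancel₀ hfy, one_smul]
  · simp_rw [abs_mul, abs_neg, abs_inv, ← mul_sum, sum_erase_eq_sub hy, div_eq_inv_mul, le_refl]

theorem exists_hasBoundedAffineRepr_erase_of_relation [DecidableEq E] {t : Finset E}
    {f : E → 𝕜} (hvec : ∑ x ∈ t, f x • x = 0) (hsum : ∑ x ∈ t, f x = 0)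
    (hf : ∃ x ∈ t, f x ≠ 0) :
    ∃ y ∈ t, HasBoundedAffineRepr (t.erase y) y (2 * #{x ∈ t | 0 < f x} - 1 : 𝕜) := by
  obtain ⟨x₀, hx₀, hfx₀⟩ := exists_pos_of_sum_zero_of_exists_nonzero f hsum hf
  obtain ⟨y, hy, hmax⟩ := t.exists_max_image f ⟨x₀, hx₀⟩
  have hfy : 0 < f y := hfx₀.trans_le (hmax x₀ hx₀)
  refine ⟨y, hy, (hasBoundedAffineRepr_erase_of_relation hvec hsum hy hfy.ne').mono_bound ?_⟩
  have hpos : ∑ x ∈ t with 0 < f x, f x ≤ #{x ∈ t | 0 < f x} * f y := by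
    simpa using sum_le_card_nsmul _ f (f y) fun x hx => hmax x (mem_filter.mp hx).1
  rw [sum_abs_eq_two_mul_sum_pos hsum, abs_of_pos hfy, div_le_iff₀ hfy]
  linarith

theorem exists_hasBoundedAffineRepr_erase [DecidableEq E] [FiniteDimensional 𝕜 E]
    {t : Finset E} (ht : finrank 𝕜 E + 1 < #t) :
    ∃ y ∈ t, HasBoundedAffineRepr (t.erase y) y (#t - 1 : 𝕜) := by
  obtain ⟨f, hvec, hsum, hf⟩ := exists_nontrivial_relation_sum_zero_of_finrank_succ_lt_card ht
  wlog hhalf : 2 * #{x ∈ t | 0 < f x} ≤ #t generalizing f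
  · refine this (-f) (by simp [hvec]) (by simp [hsum]) (by simpa using hf) ?_
    have hneg : #{x ∈ t | 0 < (-f) x} ≤ #{x ∈ t | ¬0 < f x} :=
      card_le_card <| monotone_filter_right _ fun x _ h => not_lt.mpr (neg_pos.mp h).le
    have := card_filter_add_card_filter_not (s := t) (fun x => 0 < f x)
    omega
  obtain ⟨y, hy, h⟩ := exists_hasBoundedAffineRepr_erase_of_relation hvec hsum hf
  exact ⟨y, hy, h.mono_bound <| sub_le_sub_right (by exact_mod_cast hhalf) 1⟩

/-- Every finite set `C` of `n` distinct points in `ℝ^d` with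
`n > 24·d·log₂(d+1)` contains a point `y` expressible as an affine combination of the
remaining points with coefficient ℓ¹-norm at most `d+1`. -/
theorem cluster_inference_core (d n : ℕ) (hd : 1 ≤ d)
    (C : Finset (EuclideanSpace ℝ (Fin d))) (hcard : C.card = n)
    (hn : (24 : ℝ) * d * Real.logb 2 (d + 1) < n) :
    letI : DecidableEq (EuclideanSpace ℝ (Fin d)) := Classical.decEq _
    ∃ y ∈ C, ∃ a : EuclideanSpace ℝ (Fin d) → ℝ,
      (∑ x ∈ C.erase y, a x = 1) ∧
      (∑ x ∈ C.erase y, a x • x = y) ∧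
      (∑ x ∈ C.erase y, |a x| ≤ (d : ℝ) + 1) := by
  -- the `erase` in the lemmas below must use the statement's instance, not `classical`'s
  let : DecidableEq (EuclideanSpace ℝ (Fin d)) := Classical.decEq _
  have hlog : 1 ≤ Real.logb 2 (d + 1) := by
    rw [Real.le_logb_iff_rpow_le one_lt_two (by positivity), Real.rpow_one]
    exact_mod_cast Nat.succ_le_succ hd
  have hdn : d + 2 ≤ #C := by
    have : (1 : ℝ) ≤ d := by exact_mod_cast hd
    rw [hcard]; exact_mod_cast (show (d + 2 : ℝ) < n by nlinarith).le
  obtain ⟨t, htC, ht⟩ := exists_subset_card_eq hdn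
  obtain ⟨y, hy, h⟩ := exists_hasBoundedAffineRepr_erase (𝕜 := ℝ) (t := t)
    (by rw [finrank_euclideanSpace_fin, ht]; omega)
  refine ⟨y, htC hy, (h.mono (erase_subset_erase y htC)).mono_bound ?_⟩
  rw [ht]; push_cast; linarith
end

section
/- Let d ≥ 1 and n ≥ 1 be integers, let x₁, …, xₙ ∈ ℝ^d and y ∈ ℝ^d. Suppose that there is no vector a ∈ ℝⁿ satisfying Σᵢ aᵢ = 1, Σᵢ aᵢ·xᵢ = y, and Σᵢ |aᵢ| ≤ d+1. Then there exists an affine function L : ℝ^d → ℝ such that L(y) − maxᵢ L(xᵢ) > (d/2)·(maxᵢ L(xᵢ) − minᵢ L(xᵢ)) ≥ 0. -/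
/-!
The points `∑ aᵢ • xᵢ` with `∑ aᵢ = 1` and `∑ |aᵢ| ≤ d + 1` form the linear image of a compact
convex set of weights, so a point `y` outside it is strictly separated from it by a continuous
linear functional `f`. If `j` maximises and `k` minimises `f (xᵢ)`, the weight vector
`(1 + d/2) eⱼ - (d/2) eₖ` is admissible, and testing `f` against it gives
`(1 + d/2) maxᵢ f (xᵢ) - (d/2) minᵢ f (xᵢ) < f y`.
-/

open Finset

def boundedAffineWeights (ι : Type*) [Fintype ι] (r : ℝ) : Set (ι → ℝ) :=
  {a | ∑ i, a i = 1 ∧ ∑ i, |a i| ≤ r}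

section Weights

variable {ι : Type*} [Fintype ι] {r : ℝ}

theorem isCompact_boundedAffineWeights : IsCompact (boundedAffineWeights ι r) := by
  refine Metric.isCompact_of_isClosed_isBounded ?_ ?_
  · exact (isClosed_eq (by fun_prop) continuous_const).inter
      (isClosed_le (continuous_finsetSum _ fun i _ => (continuous_apply i).abs) continuous_const)
  · refine (Metric.isBounded_closedBall (x := 0) (r := r)).subset fun a ⟨_, ha⟩ => ?_
    rw [mem_closedBall_zero_iff,
      pi_norm_le_iff_of_nonneg ((sum_nonneg fun i _ => abs_nonneg (a i)).trans ha)]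
    exact fun i => (single_le_sum (fun j _ => abs_nonneg (a j)) (mem_univ i)).trans ha

theorem convex_boundedAffineWeights : Convex ℝ (boundedAffineWeights ι r) := by
  rintro a ⟨ha₁, ha₂⟩ b ⟨hb₁, hb₂⟩ p q hp hq hpq
  refine ⟨by simp [sum_add_distrib, ← mul_sum, ha₁, hb₁, hpq], ?_⟩
  calc ∑ i, |p * a i + q * b i| ≤ ∑ i, (p * |a i| + q * |b i|) := by
        gcongr with i
        exact (abs_add_le _ _).trans_eq
          (by rw [abs_mul, abs_mul, abs_of_nonneg hp, abs_of_nonneg hq])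
    _ = p * ∑ i, |a i| + q * ∑ i, |b i| := by rw [sum_add_distrib, mul_sum, mul_sum]
    _ ≤ p * r + q * r := by gcongr
    _ = r := by rw [← add_mul, hpq, one_mul]

theorem single_sub_single_mem_boundedAffineWeights [DecidableEq ι] (j k : ι) {t : ℝ}
    (ht : 0 ≤ t) (hr : 1 + 2 * t ≤ r) :
    Pi.single j (1 + t) - Pi.single k t ∈ boundedAffineWeights ι r := by
  refine ⟨by simp [sum_sub_distrib], ?_⟩
  calc ∑ i, |(Pi.single j (1 + t) - Pi.single k t : ι → ℝ) i|
      ≤ ∑ i, (|Pi.single j (1 + t) i| + |Pi.single k t i|) := by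
        gcongr with i; exact abs_sub _ _
    _ = (1 + t) + t := by
        simp only [sum_add_distrib, Pi.single_apply, apply_ite abs, abs_zero, sum_ite_eq',
          mem_univ, if_true, abs_of_nonneg ht, abs_of_nonneg (by linarith : (0 : ℝ) ≤ 1 + t)]
    _ ≤ r := by linarith

end Weights

theorem exists_strongDual_lt_of_notMem_image_boundedAffineWeights {ι E : Type*} [Fintype ι]
    [TopologicalSpace E] [AddCommGroup E] [IsTopologicalAddGroup E] [Module ℝ E]
    [ContinuousSMul ℝ E] [LocallyConvexSpace ℝ E] [T1Space E] {x : ι → E} {y : E} {r : ℝ}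
    (hy : y ∉ Fintype.linearCombination ℝ x '' boundedAffineWeights ι r) :
    ∃ f : StrongDual ℝ E, ∀ a ∈ boundedAffineWeights ι r, ∑ i, a i * f (x i) < f y := by
  have hcont : Continuous (Fintype.linearCombination ℝ x) :=
    (continuous_finsetSum _ fun i _ => (continuous_apply i).smul continuous_const).congr
      fun a => (Fintype.linearCombination_apply ℝ x a).symm
  obtain ⟨f, u, v, hu, huv, hv⟩ := geometric_hahn_banach_compact_closed
    (convex_boundedAffineWeights.linear_image _) (isCompact_boundedAffineWeights.image hcont)
    (convex_singleton y) isClosed_singleton (Set.disjoint_singleton_right.2 hy)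
  refine ⟨f, fun a ha => ?_⟩
  have := hu _ ⟨a, ha, rfl⟩
  simp only [Fintype.linearCombination_apply, map_sum, map_smul, smul_eq_mul] at this
  linarith [hv y rfl]

theorem mul_sup'_sub_inf'_lt_sub_sup' {ι : Type*} {s : Finset ι} (hs : s.Nonempty) {g : ι → ℝ}
    {t c : ℝ} (h : ∀ j ∈ s, ∀ k ∈ s, (1 + t) * g j - t * g k < c) :
    t * (s.sup' hs g - s.inf' hs g) < c - s.sup' hs g := by
  obtain ⟨j, hj, hjmax⟩ := s.exists_mem_eq_sup' hs g
  obtain ⟨k, hk, hkmin⟩ := s.exists_mem_eq_inf' hs g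
  rw [hjmax, hkmin]
  linarith [h j hj k hk]

theorem separation_from_infeasibility_general (d n : ℕ) (hn : 1 ≤ n)
    (x : Fin n → EuclideanSpace ℝ (Fin d)) (y : EuclideanSpace ℝ (Fin d))
    (h : ¬ ∃ a : Fin n → ℝ,
        (∑ i, a i = 1) ∧ (∑ i, a i • x i = y) ∧ (∑ i, |a i| ≤ (d : ℝ) + 1)) :
    ∃ L : EuclideanSpace ℝ (Fin d) →ᵃ[ℝ] ℝ,
      (d : ℝ) / 2 *
          (Finset.univ.sup' (Finset.univ_nonempty_iff.mpr (Fin.pos_iff_nonempty.mp hn))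
              (fun i => L (x i)) -
            Finset.univ.inf' (Finset.univ_nonempty_iff.mpr (Fin.pos_iff_nonempty.mp hn))
              (fun i => L (x i))) <
        L y -
          Finset.univ.sup' (Finset.univ_nonempty_iff.mpr (Fin.pos_iff_nonempty.mp hn))
            (fun i => L (x i)) ∧
      0 ≤ (d : ℝ) / 2 *
          (Finset.univ.sup' (Finset.univ_nonempty_iff.mpr (Fin.pos_iff_nonempty.mp hn))
              (fun i => L (x i)) -
            Finset.univ.inf' (Finset.univ_nonempty_iff.mpr (Fin.pos_iff_nonempty.mp hn))
              (fun i => L (x i))) := by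
  classical
  have hy : y ∉ Fintype.linearCombination ℝ x '' boundedAffineWeights (Fin n) (d + 1) := by
    rintro ⟨a, ⟨ha₁, ha₂⟩, rfl⟩
    exact h ⟨a, ha₁, (Fintype.linearCombination_apply ℝ x a).symm, ha₂⟩
  obtain ⟨f, hf⟩ := exists_strongDual_lt_of_notMem_image_boundedAffineWeights hy
  have hd : (0 : ℝ) ≤ d / 2 := by positivity
  have hinf_le_sup : univ.inf' _ (fun i => f (x i)) ≤ univ.sup' _ (fun i => f (x i)) :=
    (inf'_le _ (mem_univ ⟨0, hn⟩)).trans (le_sup' (fun i => f (x i)) (mem_univ _))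
  refine ⟨f.toLinearMap.toAffineMap, mul_sup'_sub_inf'_lt_sub_sup' _ fun j _ k _ => ?_,
    mul_nonneg hd (sub_nonneg.2 hinf_le_sup)⟩
  have := hf _ (single_sub_single_mem_boundedAffineWeights j k hd (by linarith))
  simpa [sub_mul, sum_sub_distrib, Pi.single_apply, ite_mul] using this

/-- If `y` is not an affine combination of `x₁,…,xₙ` with coefficient ℓ¹-norm
at most `d+1`, then some affine functional `L` satisfies
`L(y) − maxᵢ L(xᵢ) > (d/2)·(maxᵢ L(xᵢ) − minᵢ L(xᵢ)) ≥ 0`. -/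
theorem separation_from_infeasibility (d n : ℕ) (hd : 1 ≤ d) (hn : 1 ≤ n)
    (x : Fin n → EuclideanSpace ℝ (Fin d)) (y : EuclideanSpace ℝ (Fin d))
    (h : ¬ ∃ a : Fin n → ℝ,
        (∑ i, a i = 1) ∧ (∑ i, a i • x i = y) ∧ (∑ i, |a i| ≤ (d : ℝ) + 1)) :
    ∃ L : EuclideanSpace ℝ (Fin d) →ᵃ[ℝ] ℝ,
      (d : ℝ) / 2 *
          (Finset.univ.sup' (Finset.univ_nonempty_iff.mpr (Fin.pos_iff_nonempty.mp hn))
              (fun i => L (x i)) -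
            Finset.univ.inf' (Finset.univ_nonempty_iff.mpr (Fin.pos_iff_nonempty.mp hn))
              (fun i => L (x i))) <
        L y -
          Finset.univ.sup' (Finset.univ_nonempty_iff.mpr (Fin.pos_iff_nonempty.mp hn))
            (fun i => L (x i)) ∧
      0 ≤ (d : ℝ) / 2 *
          (Finset.univ.sup' (Finset.univ_nonempty_iff.mpr (Fin.pos_iff_nonempty.mp hn))
              (fun i => L (x i)) -
            Finset.univ.inf' (Finset.univ_nonempty_iff.mpr (Fin.pos_iff_nonempty.mp hn))
              (fun i => L (x i))) :=
  separation_from_infeasibility_general d n hn x y h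
end

section
/- Let d ≥ 1 be an integer, let C ⊆ ℝ^d be a finite nonempty set, let y ∈ ℝ^d, and let L : ℝ^d → ℝ be an affine function satisfying L(y) − max_{x∈C} L(x) > (d/2)·(max_{x∈C} L(x) − min_{x∈C} L(x)) ≥ 0. Then vol(convexHull(C ∪ {y})) ≥ (e²/(e²−1))·vol(convexHull(C)). -/
/-!
Put `M = max_C L`, `m = min_C L`, `K = conv (C ∪ {y})` and `t = (L y - M) / (L y - m)`.
The homothety with centre `y` and ratio `t` maps the convex body `K` into its part in the
half-space `L ≥ M`, while `conv C` lies in `L ≤ M`; the two pieces meet in a null hyperplane, so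
`vol (conv C) + t^d vol K ≤ vol K`. The hypothesis says `d (L y - m) ≤ (d + 2) (L y - M)`, whence
`t^d ≥ (1 + 2/d)^{-d} ≥ e^{-2}`, i.e. `vol (conv C) ≤ (1 - e^{-2}) vol K`.
-/

open MeasureTheory Set AffineMap Module

theorem Convex.image_homothety_subset {𝕜 E : Type*} [Field 𝕜] [LinearOrder 𝕜]
    [IsStrictOrderedRing 𝕜] [AddCommGroup E] [Module 𝕜 E] {K : Set E} (hK : Convex 𝕜 K)
    {y : E} (hy : y ∈ K) {t : 𝕜} (ht : t ∈ Icc 0 1) : homothety y t '' K ⊆ K := by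
  rintro _ ⟨x, hx, rfl⟩
  rw [homothety_eq_lineMap]
  exact hK.lineMap_mem hy hx ht

section AddHaar

variable {E : Type*} [NormedAddCommGroup E] [NormedSpace ℝ E] [MeasurableSpace E] [BorelSpace E]
  [FiniteDimensional ℝ E] (μ : Measure E) [μ.IsAddHaarMeasure]

theorem AffineMap.addHaar_preimage_singleton (L : E →ᵃ[ℝ] ℝ) {c : ℝ} {z : E} (hz : L z ≠ c) :
    μ (L ⁻¹' {c}) = 0 := by
  have hlevel : ((AffineSubspace.mk' c ⊥).comap L : Set E) = L ⁻¹' {c} := by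
    ext x
    simp [AffineSubspace.mem_mk', sub_eq_zero]
  rw [← hlevel]
  refine Measure.addHaar_affineSubspace μ _ fun htop => hz ?_
  have hz' : z ∈ (AffineSubspace.mk' c ⊥).comap L := htop ▸ AffineSubspace.mem_top ℝ E z
  simpa [AffineSubspace.mem_mk', sub_eq_zero] using hz'

theorem AffineMap.aedisjoint_of_le_of_ge (L : E →ᵃ[ℝ] ℝ) {c : ℝ} {z : E} (hz : L z ≠ c)
    {A B : Set E} (hA : ∀ x ∈ A, L x ≤ c) (hB : ∀ x ∈ B, c ≤ L x) : AEDisjoint μ A B :=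
  measure_mono_null (fun x hx => le_antisymm (hA x hx.1) (hB x hx.2))
    (L.addHaar_preimage_singleton μ hz)

theorem Convex.addHaar_add_pow_mul_addHaar_le {A K : Set E} (hK : Convex ℝ K) (hAK : A ⊆ K)
    {y : E} (hy : y ∈ K) (L : E →ᵃ[ℝ] ℝ) {m c : ℝ} (hmc : m ≤ c) (hc : c < L y)
    (hA : ∀ x ∈ A, L x ≤ c) (hK_ge : ∀ x ∈ K, m ≤ L x) :
    μ A + ENNReal.ofReal (((L y - c) / (L y - m)) ^ finrank ℝ E) * μ K ≤ μ K := by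
  set t := (L y - c) / (L y - m)
  have ht : t ∈ Icc 0 1 :=
    ⟨div_nonneg (by linarith) (by linarith), div_le_one_of_le₀ (by linarith) (by linarith)⟩
  have hB : ∀ x ∈ homothety y t '' K, c ≤ L x := by
    rintro _ ⟨x, hx, rfl⟩
    have hty : t * (L y - m) = L y - c := div_mul_cancel₀ _ (by linarith)
    rw [homothety_eq_lineMap, apply_lineMap, lineMap_apply_ring']
    nlinarith [hK_ge x hx, ht.1]
  calc μ A + ENNReal.ofReal (t ^ finrank ℝ E) * μ K = μ (A ∪ homothety y t '' K) := by
        rw [measure_union₀ ((hK.affine_image _).nullMeasurableSet μ)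
          (L.aedisjoint_of_le_of_ge μ hc.ne' hA hB), Measure.addHaar_image_homothety, abs_of_nonneg (pow_nonneg ht.1 _)]
    _ ≤ μ K := measure_mono (union_subset hAK (hK.image_homothety_subset hy ht))

end AddHaar

theorem Real.exp_neg_two_le_div_pow {a b : ℝ} {n : ℕ} (hb : 0 < b) (hba : b ≤ a)
    (h : n * (a - b) ≤ 2 * b) : Real.exp (-2) ≤ (b / a) ^ n := by
  have hx : Real.exp (-((a - b) / b)) ≤ b / a := by
    rw [Real.exp_neg, inv_le_comm₀ (Real.exp_pos _) (div_pos hb (hb.trans_le hba)), inv_div]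
    calc a / b = (a - b) / b + 1 := by field_simp; ring
      _ ≤ Real.exp ((a - b) / b) := Real.add_one_le_exp _
  calc Real.exp (-2) ≤ Real.exp (-((a - b) / b)) ^ n := by
        rw [← Real.exp_nat_mul]
        gcongr
        rw [mul_neg, neg_le_neg_iff, ← mul_div_assoc, div_le_iff₀ hb]
        exact h
    _ ≤ (b / a) ^ n := by gcongr

theorem ENNReal.ofReal_div_sub_one_mul_le {a k : ENNReal} {q s : ℝ} (hq : 1 < q) (hs : q⁻¹ ≤ s)
    (hk : k ≠ ⊤) (h : a + ENNReal.ofReal s * k ≤ k) : ENNReal.ofReal (q / (q - 1)) * a ≤ k := by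
  have ha : a ≠ ⊤ := ne_top_of_le_ne_top hk (le_self_add.trans h)
  have hs0 : 0 ≤ s := (inv_nonneg.2 (by linarith)).trans hs
  have hqs : 1 ≤ q * s := by rwa [inv_le_iff_one_le_mul₀' (by linarith)] at hs
  rw [← ENNReal.ofReal_toReal ha, ← ENNReal.ofReal_toReal hk] at h ⊢
  rw [← ENNReal.ofReal_mul hs0, ← ENNReal.ofReal_add ENNReal.toReal_nonneg (by positivity),
    ENNReal.ofReal_le_ofReal_iff ENNReal.toReal_nonneg] at h
  rw [← ENNReal.ofReal_mul (div_nonneg (by linarith) (by linarith))]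
  apply ENNReal.ofReal_le_ofReal
  rw [div_mul_eq_mul_div, div_le_iff₀ (by linarith)]
  nlinarith [mul_le_mul_of_nonneg_right hqs (ENNReal.toReal_nonneg (a := k))]

theorem convexHull_volume_expansion_general (d : ℕ)
    (C : Finset (EuclideanSpace ℝ (Fin d))) (hC : C.Nonempty)
    (y : EuclideanSpace ℝ (Fin d)) (L : EuclideanSpace ℝ (Fin d) →ᵃ[ℝ] ℝ)
    (h1 : (d : ℝ) / 2 * (C.sup' hC (fun x => L x) - C.inf' hC (fun x => L x)) <
      L y - C.sup' hC (fun x => L x)) :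
    ENNReal.ofReal (Real.exp 1 ^ 2 / (Real.exp 1 ^ 2 - 1)) *
        volume (convexHull ℝ (C : Set (EuclideanSpace ℝ (Fin d)))) ≤
      volume (convexHull ℝ (insert y (C : Set (EuclideanSpace ℝ (Fin d))))) := by
  set M := C.sup' hC (fun x => L x)
  set m := C.inf' hC (fun x => L x)
  have hmM : m ≤ M := (C.inf'_le _ hC.choose_spec).trans (C.le_sup' _ hC.choose_spec)
  have hM : M < L y := by
    have : 0 ≤ (d : ℝ) / 2 * (M - m) := by have := sub_nonneg.2 hmM; positivity
    linarith
  have hA : convexHull ℝ (C : Set _) ⊆ L ⁻¹' Iic M :=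
    convexHull_min (fun x hx => C.le_sup' (fun x => L x) hx) ((convex_Iic M).affine_preimage L)
  have hK : convexHull ℝ (insert y (C : Set _)) ⊆ L ⁻¹' Ici m :=
    convexHull_min (insert_subset (show m ≤ L y by linarith) fun x hx => C.inf'_le (fun x => L x) hx)
      ((convex_Ici m).affine_preimage L)
  have hcut := (convex_convexHull ℝ _).addHaar_add_pow_mul_addHaar_le volume
    (convexHull_mono (subset_insert y _)) (subset_convexHull ℝ _ (mem_insert y _)) L hmM hM
    hA hK
  refine ENNReal.ofReal_div_sub_one_mul_le (by nlinarith [Real.exp_one_gt_d9]) ?_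
    ((C.finite_toSet.insert y).isCompact_convexHull ℝ).measure_lt_top.ne hcut
  rw [Real.exp_one_pow, ← Real.exp_neg, finrank_euclideanSpace_fin]
  exact_mod_cast Real.exp_neg_two_le_div_pow (by linarith) (by linarith) (by linarith)

/-- If an affine function `L` satisfies
`L(y) − max_{x∈C} L(x) > (d/2)·(max_{x∈C} L(x) − min_{x∈C} L(x)) ≥ 0`, then adding `y` to `C`
multiplies the volume of the convex hull by at least `e²/(e²−1)`. -/
theorem convexHull_volume_expansion (d : ℕ) (hd : 1 ≤ d)
    (C : Finset (EuclideanSpace ℝ (Fin d))) (hC : C.Nonempty)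
    (y : EuclideanSpace ℝ (Fin d)) (L : EuclideanSpace ℝ (Fin d) →ᵃ[ℝ] ℝ)
    (h1 : (d : ℝ) / 2 * (C.sup' hC (fun x => L x) - C.inf' hC (fun x => L x)) <
      L y - C.sup' hC (fun x => L x))
    (h2 : 0 ≤ (d : ℝ) / 2 * (C.sup' hC (fun x => L x) - C.inf' hC (fun x => L x))) :
    ENNReal.ofReal (Real.exp 1 ^ 2 / (Real.exp 1 ^ 2 - 1)) *
        volume (convexHull ℝ (C : Set (EuclideanSpace ℝ (Fin d)))) ≤
      volume (convexHull ℝ (insert y (C : Set (EuclideanSpace ℝ (Fin d))))) :=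
  convexHull_volume_expansion_general d C hC y L h1
end

section
/- Let d ≥ 1 be an integer and let C ⊆ ℝ^d be a finite set of n points with n ≥ d+1. Then vol(convexHull(C)) ≤ binom(n, d) · max{ vol(convexHull(S)) : S ⊆ C, |S| = d+1 }, i.e. the volume of the convex hull of C is at most the binomial coefficient (n choose d) times the volume of the largest simplex with vertices in C. -/
/-!
Fix `v ∈ C`. Every point `x` of `conv C` lies in a simplex spanned by `v` and `d` further points
of `C`. Indeed, by Carathéodory `x` lies in a simplex with vertices in `C`; if that simplex is
full-dimensional, subtracting from the barycentric coordinates of `x` the largest multiple of those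
of `v` that keeps them nonnegative trades one vertex for `v`. Hence `conv C` is covered by the
`(n - 1).choose d` simplices `conv ({v} ∪ T)`, `T ⊆ C \ {v}`, `#T = d`.
-/

open MeasureTheory Finset Module

section

variable {𝕜 : Type*} [Field 𝕜] [LinearOrder 𝕜] [IsStrictOrderedRing 𝕜]

lemma exists_nonneg_mul_le_and_mul_eq {ι : Type*} [Fintype ι] {l m : ι → 𝕜}
    (hl : ∀ i, 0 ≤ l i) (hm : ∃ i, 0 < m i) :
    ∃ t, 0 ≤ t ∧ (∀ i, t * m i ≤ l i) ∧ ∃ i, t * m i = l i := by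
  classical
  obtain ⟨i₀, hi₀, hmin⟩ := (univ.filter (0 < m ·)).exists_min_image (fun i => l i / m i)
    (by simpa [Finset.Nonempty] using hm)
  have hm₀ : 0 < m i₀ := (mem_filter.mp hi₀).2
  have ht : 0 ≤ l i₀ / m i₀ := div_nonneg (hl i₀) hm₀.le
  refine ⟨l i₀ / m i₀, ht, fun i => ?_, i₀, div_mul_cancel₀ _ hm₀.ne'⟩
  rcases lt_or_ge 0 (m i) with hmi | hmi
  · exact (le_div_iff₀ hmi).mp (hmin i (mem_filter.mpr ⟨mem_univ i, hmi⟩))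
  · exact (mul_nonpos_of_nonneg_of_nonpos ht hmi).trans (hl i)

variable {E : Type*} [AddCommGroup E] [Module 𝕜 E]

theorem AffineBasis.exists_mem_convexHull_range_update {ι : Type*} [Fintype ι] [DecidableEq ι]
    (b : AffineBasis ι 𝕜 E) {x : E} (hx : x ∈ convexHull 𝕜 (Set.range b)) (v : E) :
    ∃ i, x ∈ convexHull 𝕜 (Set.range (Function.update b i v)) := by
  rw [b.convexHull_eq_nonneg_coord] at hx
  have hv : ∃ i, 0 < b.coord i v := by
    by_contra! h
    linarith [b.sum_coord_apply_eq_one v, Finset.sum_nonpos fun i (_ : i ∈ univ) => h i]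
  obtain ⟨t, ht, hle, i₀, heq⟩ := exists_nonneg_mul_le_and_mul_eq hx hv
  set ν := fun i => b.coord i x - t * b.coord i v
  have hν : ν i₀ = 0 := sub_eq_zero.mpr heq.symm
  have hsum : ∑ i, ν i = 1 - t := by
    simp only [ν, sum_sub_distrib, ← mul_sum, b.sum_coord_apply_eq_one, mul_one]
  have hcomb : ∑ i, ν i • b i = x - t • v := by
    simp only [ν, sub_smul, sum_sub_distrib, mul_smul, ← smul_sum,
      b.linear_combination_coord_eq_self]
  -- `x = t • v + ∑ ν i • b i` with `ν ≥ 0` and `ν i₀ = 0`: the vertex `b i₀` is replaced by `v`.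
  have hx_eq : ∑ i, Function.update ν i₀ t i • Function.update b i₀ v i = x := by
    simp only [fun i => Function.apply_update₂ (fun _ => (· • ·)) ν b i₀ t v i,
      sum_update_of_mem (mem_univ i₀)]
    rw [sum_sdiff_eq_sub (subset_univ _), sum_singleton, hν, zero_smul, sub_zero, hcomb]
    abel
  refine ⟨i₀, hx_eq ▸ (convex_convexHull 𝕜 _).sum_mem (fun i _ => ?_) ?_
    (fun i _ => subset_convexHull 𝕜 _ (Set.mem_range_self i))⟩
  · rcases eq_or_ne i i₀ with rfl | hi
    · simpa using ht
    · simpa [Function.update_of_ne hi, ν] using hle i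
  · rw [sum_update_of_mem (mem_univ i₀), sum_sdiff_eq_sub (subset_univ _), sum_singleton, hν,
      sub_zero, hsum]
    abel

theorem exists_card_le_finrank_mem_convexHull_insert [FiniteDimensional 𝕜 E] {C : Set E}
    {x : E} (hx : x ∈ convexHull 𝕜 C) (v : E) :
    ∃ S : Finset E, ↑S ⊆ C ∧ #S ≤ finrank 𝕜 E ∧ x ∈ convexHull 𝕜 (insert v ↑S) := by
  classical
  rw [convexHull_eq_union] at hx
  simp only [Set.mem_iUnion] at hx
  obtain ⟨S, hSC, hS, hxS⟩ := hx
  have hcard : #S ≤ finrank 𝕜 E + 1 := by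
    simpa using hS.card_le_finrank_succ.trans (Nat.succ_le_succ (Submodule.finrank_le _))
  rcases hcard.lt_or_eq with hlt | heq
  · exact ⟨S, hSC, Nat.lt_succ_iff.mp hlt, convexHull_mono (Set.subset_insert _ _) hxS⟩
  · let b : AffineBasis S 𝕜 E :=
      ⟨_, hS, hS.affineSpan_eq_top_iff_card_eq_finrank_add_one.mpr (by simpa using heq)⟩
    have hb : Set.range b = ↑S := Subtype.range_coe
    obtain ⟨w, hw⟩ := b.exists_mem_convexHull_range_update (hb ▸ hxS) v
    refine ⟨S.erase w, (coe_subset.mpr (erase_subset _ _)).trans hSC,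
      by simp [card_erase_of_mem w.2, heq], convexHull_mono ?_ hw⟩
    rintro _ ⟨j, rfl⟩
    rcases eq_or_ne j w with rfl | hj
    · simp
    · rw [Function.update_of_ne hj]
      exact Set.mem_insert_of_mem _ (mem_erase.mpr ⟨Subtype.coe_injective.ne hj, j.2⟩)

theorem convexHull_subset_biUnion_convexHull_insert [FiniteDimensional 𝕜 E] [DecidableEq E]
    {C : Finset E} {v : E} (hv : v ∈ C) (hC : finrank 𝕜 E < #C) :
    convexHull 𝕜 (C : Set E) ⊆
      ⋃ T ∈ (C.erase v).powersetCard (finrank 𝕜 E), convexHull 𝕜 ↑(insert v T) := by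
  intro x hx
  obtain ⟨S, hSC, hS, hxS⟩ := exists_card_le_finrank_mem_convexHull_insert hx v
  obtain ⟨T, hST, hTC, hT⟩ :=
    exists_subsuperset_card_eq (erase_subset_erase v (coe_subset.mp hSC)) (card_erase_le.trans hS)
      (by rw [card_erase_of_mem hv]; omega)
  refine Set.mem_biUnion (mem_powersetCard.mpr ⟨hTC, hT⟩) (convexHull_mono ?_ hxS)
  rw [← coe_insert, coe_subset]
  exact insert_subset (mem_insert_self v T)
    ((insert_erase_subset v S).trans (insert_subset_insert v hST))

theorem measure_convexHull_le_choose_mul_sup [FiniteDimensional 𝕜 E] [MeasurableSpace E]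
    (μ : Measure E) {C : Finset E} (hC : finrank 𝕜 E < #C) :
    μ (convexHull 𝕜 ↑C) ≤ ((#C - 1).choose (finrank 𝕜 E) : ENNReal) *
      (C.powersetCard (finrank 𝕜 E + 1)).sup fun S => μ (convexHull 𝕜 ↑S) := by
  classical
  obtain ⟨v, hv⟩ : C.Nonempty := card_pos.mp (by omega)
  calc μ (convexHull 𝕜 ↑C)
      ≤ μ (⋃ T ∈ (C.erase v).powersetCard (finrank 𝕜 E), convexHull 𝕜 ↑(insert v T)) :=
        measure_mono (convexHull_subset_biUnion_convexHull_insert hv hC)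
    _ ≤ ∑ T ∈ (C.erase v).powersetCard (finrank 𝕜 E), μ (convexHull 𝕜 ↑(insert v T)) :=
        measure_biUnion_finset_le _ _
    _ ≤ #((C.erase v).powersetCard (finrank 𝕜 E)) •
          (C.powersetCard (finrank 𝕜 E + 1)).sup fun S => μ (convexHull 𝕜 ↑S) := by
        refine sum_le_card_nsmul _ _ _ fun T hT =>
          le_sup (f := fun S : Finset E => μ (convexHull 𝕜 ↑S)) ?_
        rw [mem_powersetCard] at hT ⊢
        have hvT : v ∉ T := fun h => (mem_erase.mp (hT.1 h)).1 rfl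
        exact ⟨insert_subset hv (hT.1.trans (erase_subset v C)),
          by rw [card_insert_of_notMem hvT, hT.2]⟩
    _ = _ := by rw [nsmul_eq_mul, card_powersetCard, card_erase_of_mem hv]

end

theorem convexHull_volume_le_choose_mul_simplex_general (d n : ℕ)
    (C : Finset (EuclideanSpace ℝ (Fin d))) (hcard : C.card = n) (hn : d + 1 ≤ n) :
    volume (convexHull ℝ (C : Set (EuclideanSpace ℝ (Fin d)))) ≤
      (n.choose d : ENNReal) *
        (C.powersetCard (d + 1)).sup
          (fun S => volume (convexHull ℝ (S : Set (EuclideanSpace ℝ (Fin d))))) := by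
  have h := measure_convexHull_le_choose_mul_sup (𝕜 := ℝ) volume (C := C)
    (by rw [finrank_euclideanSpace_fin]; omega)
  rw [finrank_euclideanSpace_fin, hcard] at h
  refine h.trans (mul_le_mul_left ?_ _)
  exact_mod_cast Nat.choose_le_choose d (Nat.sub_le n 1)

/-- The volume of the convex hull of an `n`-point set `C ⊆ ℝ^d` (with
`n ≥ d+1`) is at most `(n choose d)` times the volume of the largest simplex with
vertices in `C`. -/
theorem convexHull_volume_le_choose_mul_simplex (d n : ℕ) (hd : 1 ≤ d)
    (C : Finset (EuclideanSpace ℝ (Fin d))) (hcard : C.card = n) (hn : d + 1 ≤ n) :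
    volume (convexHull ℝ (C : Set (EuclideanSpace ℝ (Fin d)))) ≤
      (n.choose d : ENNReal) *
        (C.powersetCard (d + 1)).sup
          (fun S => volume (convexHull ℝ (S : Set (EuclideanSpace ℝ (Fin d))))) :=
  convexHull_volume_le_choose_mul_simplex_general d n C hcard hn
end

section
/- For all integers d ≥ 1 and n ≥ 1 with n > 24·d·log₂(d+1), one has (e²/(e²−1))^(n−d−1) > binom(n, d). -/
/-!
Bound `binom(n, d) ≤ n ^ d` and compare logarithms: `log (e² / (e² - 1)) > 1 / 7`, so it suffices
that `d log n < (n - d - 1) / 7`. Both sides are compared through the tangent line of `log` at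
`m = 24 d log₂ (d + 1)` (at `m = 25` when `d = 1`, using that `n` is an integer): beyond `m` the
right side grows with slope `1 / 7`, faster than the left side's slope `d / m`, so only the
inequality at `m` itself remains, and that is a numerical estimate.
-/

open Real

lemma Real.pow_lt_pow_of_mul_log_lt {x y : ℝ} (hx : 0 < x) (hy : 0 < y) {k m : ℕ}
    (h : k * log x < m * log y) : x ^ k < y ^ m := by
  rwa [← log_lt_log_iff (by positivity) (by positivity), log_pow, log_pow]

lemma Real.mul_log_lt_of_le {a m x κ : ℝ} (ha : 0 ≤ a) (hm : 0 < m) (hmx : m ≤ x)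
    (hslope : a ≤ κ * m) (hbase : a * log m < κ * (m - a - 1)) :
    a * log x < κ * (x - a - 1) := by
  have htangent : log x ≤ log m + (x / m - 1) := by
    have := log_le_sub_one_of_pos (div_pos (hm.trans_le hmx) hm)
    rw [log_div (hm.trans_le hmx).ne' hm.ne'] at this
    linarith
  have hgrowth : a * (x / m - 1) ≤ κ * (x - m) := by
    rw [div_sub_one hm.ne', mul_div_assoc', div_le_iff₀ hm]
    nlinarith [sub_nonneg.2 hmx]
  calc a * log x ≤ a * log m + a * (x / m - 1) := by
        rw [← mul_add]; exact mul_le_mul_of_nonneg_left htangent ha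
    _ < κ * (m - a - 1) + κ * (x - m) := add_lt_add_of_lt_of_le hbase hgrowth
    _ = κ * (x - a - 1) := by ring

lemma Real.log_two_lt_seven_tenths : log 2 < 7 / 10 := by
  linarith [log_two_lt_d9]

lemma Real.log_twentyfive_le : log 25 ≤ 14 / 3 * log 2 := by
  have h : log ((25 : ℝ) ^ 3) ≤ log ((2 : ℝ) ^ 14) := log_le_log (by norm_num) (by norm_num)
  rw [log_pow, log_pow] at h
  push_cast at h
  linarith

lemma Real.three_halves_le_logb_two {x : ℝ} (hx : 3 ≤ x) : 3 / 2 ≤ logb 2 x := by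
  have h : log ((2 : ℝ) ^ 3) ≤ log (x ^ 2) := log_le_log (by norm_num) (by nlinarith)
  rw [log_pow, log_pow] at h
  rw [le_logb_iff_rpow_le one_lt_two (by linarith), ← log_le_log_iff (by positivity)
    (by linarith), log_rpow two_pos]
  push_cast at h
  linarith

lemma Real.inv_seven_lt_log_exp_sq_div :
    (1 / 7 : ℝ) < log (exp 1 ^ 2 / (exp 1 ^ 2 - 1)) := by
  have he := exp_one_lt_d9
  have he' := exp_one_gt_d9
  have hc : (1.1564 : ℝ) ≤ exp 1 ^ 2 / (exp 1 ^ 2 - 1) := by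
    rw [le_div_iff₀ (by nlinarith)]
    nlinarith
  have h7 : exp 1 < (exp 1 ^ 2 / (exp 1 ^ 2 - 1)) ^ 7 :=
    calc exp 1 < 1.1564 ^ 7 := by norm_num at he ⊢; linarith
      _ ≤ _ := pow_le_pow_left₀ (by norm_num) hc 7
  have := log_lt_log (exp_pos 1) h7
  rw [log_exp, log_pow] at this
  push_cast at this
  linarith

lemma Real.mul_log_tangent_point_lt {d : ℝ} (hd : 2 ≤ d) :
    d * log (24 * d * logb 2 (d + 1)) < 1 / 7 * (24 * d * logb 2 (d + 1) - d - 1) := by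
  set t := logb 2 (d + 1)
  have ht : 3 / 2 ≤ t := three_halves_le_logb_two (by linarith)
  have hlogd : log d ≤ t * log 2 := by
    rw [show t = log (d + 1) / log 2 from rfl, div_mul_cancel₀ _ (log_pos one_lt_two).ne']
    exact log_le_log (by linarith) (by linarith)
  have hlog24 : log 24 ≤ log 25 := log_le_log (by norm_num) (by norm_num)
  have hunit : log 24 + log d + log t < 1 / 7 * (24 * t - 3 / 2) := by
    nlinarith [log_le_sub_one_of_pos (show 0 < t by linarith), log_twentyfive_le,
      log_two_lt_seven_tenths, log_pos one_lt_two]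
  rw [log_mul (by positivity) (by positivity), log_mul (by norm_num) (by positivity)]
  nlinarith

lemma mul_log_lt_of_mul_logb_lt {d n : ℕ} (hd : 1 ≤ d)
    (h : (24 : ℝ) * d * logb 2 (d + 1) < n) :
    d * log n < 1 / 7 * (n - d - 1) := by
  obtain rfl | hd2 := hd.eq_or_lt
  · simp only [Nat.cast_one] at h ⊢
    have h25 : (25 : ℝ) ≤ n := by
      norm_num at h
      exact_mod_cast (show 24 < n by exact_mod_cast h)
    refine mul_log_lt_of_le (κ := 1 / 7) zero_le_one (by norm_num) h25 (by norm_num) ?_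
    norm_num
    linarith [log_twentyfive_le, log_two_lt_seven_tenths]
  · have hd_real : (2 : ℝ) ≤ d := by exact_mod_cast hd2
    have ht := three_halves_le_logb_two (show (3 : ℝ) ≤ d + 1 by linarith)
    exact mul_log_lt_of_le (κ := 1 / 7) (by positivity) (by positivity) h.le (by nlinarith)
      (mul_log_tangent_point_lt hd_real)

theorem counting_inequality_general (d n : ℕ) (hd : 1 ≤ d)
    (h : (24 : ℝ) * d * Real.logb 2 (d + 1) < n) :
    (n.choose d : ℝ) < (Real.exp 1 ^ 2 / (Real.exp 1 ^ 2 - 1)) ^ (n - d - 1) := by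
  have hkey := mul_log_lt_of_mul_logb_lt hd h
  have hlog_c := Real.inv_seven_lt_log_exp_sq_div
  have hnd : d + 1 < n := by
    have : (d : ℝ) + 1 < n := by nlinarith [Real.log_natCast_nonneg n]
    exact_mod_cast this
  have hcast : ((n - d - 1 : ℕ) : ℝ) = n - d - 1 := by
    rw [Nat.sub_sub, Nat.cast_sub hnd.le]
    push_cast
    ring
  have hc_pos : 0 < Real.exp 1 ^ 2 / (Real.exp 1 ^ 2 - 1) :=
    div_pos (by positivity) (by nlinarith [Real.exp_one_gt_d9])
  calc (n.choose d : ℝ) ≤ (n : ℝ) ^ d := by exact_mod_cast Nat.choose_le_pow n d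
    _ < _ := by
      refine Real.pow_lt_pow_of_mul_log_lt (by exact_mod_cast hnd.pos) hc_pos ?_
      rw [hcast]
      nlinarith

/-- For integers `d ≥ 1` and `n ≥ 1` with `n > 24·d·log₂(d+1)`, one has
`(e²/(e²−1))^(n−d−1) > (n choose d)`. -/
theorem counting_inequality (d n : ℕ) (hd : 1 ≤ d) (hn : 1 ≤ n)
    (h : (24 : ℝ) * d * Real.logb 2 (d + 1) < n) :
    (n.choose d : ℝ) < (Real.exp 1 ^ 2 / (Real.exp 1 ^ 2 - 1)) ^ (n - d - 1) :=
  counting_inequality_general d n hd h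
end

section
/- Let d ≥ 1 be an integer, γ > 0 a real number, and ℓ : ℝ^d → ℝ an affine function. Let x₁, …, xₙ ∈ ℝ^d satisfy ℓ(xᵢ) ≥ γ for all i and |ℓ(xᵢ) − ℓ(xⱼ)| ≤ γ/d for all i, j. If y = Σᵢ aᵢ·xᵢ for real coefficients aᵢ with Σᵢ aᵢ = 1 and Σᵢ |aᵢ| ≤ d+1, then ℓ(y) ≥ γ/2. -/
/-!
Let `m` be the least value of `ℓ` on the cluster, so every `ℓ(xᵢ)` lies in `[m, m + γ/d]`.
Since `ℓ` is affine and `∑ aᵢ = 1`, `ℓ(y) = ∑ aᵢ ℓ(xᵢ) ≥ m - (γ/d) ∑ aᵢ⁻`, and the negative parts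
of coefficients with sum `1` and `ℓ¹`-norm at most `d + 1` add up to at most `d/2`.
-/

open Finset

theorem AffineMap.map_sum_smul_of_sum_eq_one {ι k V₁ V₂ : Type*} [Ring k] [AddCommGroup V₁]
    [Module k V₁] [AddCommGroup V₂] [Module k V₂] (f : V₁ →ᵃ[k] V₂) (s : Finset ι)
    (w : ι → k) (p : ι → V₁) (hw : ∑ i ∈ s, w i = 1) :
    f (∑ i ∈ s, w i • p i) = ∑ i ∈ s, w i • f (p i) := by
  rw [← s.affineCombination_eq_linear_combination p w hw, s.map_affineCombination p w hw f,
    s.affineCombination_eq_linear_combination _ w hw, Function.comp_def]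

section
variable {α ι : Type*} [Field α] [LinearOrder α] [IsStrictOrderedRing α]

lemma mul_sub_mul_negPart_le_mul {a v m ε : α} (hm : m ≤ v) (hv : v ≤ m + ε) :
    a * m - ε * a⁻ ≤ a * v := by
  nlinarith [posPart_sub_negPart a, posPart_nonneg a, negPart_nonneg a]

lemma sub_mul_sum_negPart_le_sum_mul {s : Finset ι} {a v : ι → α} {m ε : α}
    (hv : ∀ i ∈ s, v i ∈ Set.Icc m (m + ε)) :
    m * ∑ i ∈ s, a i - ε * ∑ i ∈ s, (a i)⁻ ≤ ∑ i ∈ s, a i * v i := by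
  rw [mul_sum, mul_sum, ← sum_sub_distrib]
  exact sum_le_sum fun i hi => by
    simpa only [mul_comm m] using mul_sub_mul_negPart_le_mul (hv i hi).1 (hv i hi).2

lemma two_mul_sum_negPart (s : Finset ι) (a : ι → α) :
    2 * ∑ i ∈ s, (a i)⁻ = ∑ i ∈ s, |a i| - ∑ i ∈ s, a i := by
  rw [mul_sum, ← sum_sub_distrib]
  exact sum_congr rfl fun i _ => by
    linarith [posPart_add_negPart (a i), posPart_sub_negPart (a i)]

end

theorem cluster_sign_transfer_general (d n : ℕ) (hd : 1 ≤ d) (γ : ℝ)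
    (ℓ : EuclideanSpace ℝ (Fin d) →ᵃ[ℝ] ℝ) (x : Fin n → EuclideanSpace ℝ (Fin d))
    (hmargin : ∀ i, γ ≤ ℓ (x i))
    (hcluster : ∀ i j, |ℓ (x i) - ℓ (x j)| ≤ γ / d)
    (a : Fin n → ℝ) (y : EuclideanSpace ℝ (Fin d))
    (hy : y = ∑ i, a i • x i) (ha1 : ∑ i, a i = 1) (ha2 : ∑ i, |a i| ≤ (d : ℝ) + 1) :
    γ / 2 ≤ ℓ y := by
  have hne : (univ : Finset (Fin n)).Nonempty :=
    nonempty_of_sum_ne_zero (ha1.trans_ne one_ne_zero)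
  obtain ⟨i₀, -, hmin⟩ := univ.exists_min_image (fun i => ℓ (x i)) hne
  have hval : ℓ y = ∑ i, a i * ℓ (x i) := by
    simpa only [hy, smul_eq_mul] using ℓ.map_sum_smul_of_sum_eq_one univ a x ha1
  have hIcc : ∀ i ∈ univ, ℓ (x i) ∈ Set.Icc (ℓ (x i₀)) (ℓ (x i₀) + γ / d) := fun i hi =>
    ⟨hmin i hi, by linarith [(abs_le.1 (hcluster i i₀)).2]⟩
  have hlower := sub_mul_sum_negPart_le_sum_mul (a := a) hIcc
  have hneg := two_mul_sum_negPart univ a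
  have hε : 0 ≤ γ / d := (abs_nonneg _).trans (hcluster i₀ i₀)
  have hεd : γ / d * d = γ := div_mul_cancel₀ γ (Nat.cast_ne_zero.2 (by omega))
  rw [ha1] at hlower hneg
  linarith [hmargin i₀, mul_le_mul_of_nonneg_left (show 2 * ∑ i, (a i)⁻ ≤ d by linarith) hε]

/-- A `γ/d`-cluster with margin `γ` (under an affine function `ℓ`) determines
the sign of any affine combination of its points with coefficient ℓ¹-norm at most `d+1`:
such a combination `y` satisfies `ℓ(y) ≥ γ/2`. -/
theorem cluster_sign_transfer (d n : ℕ) (hd : 1 ≤ d) (γ : ℝ) (hγ : 0 < γ)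
    (ℓ : EuclideanSpace ℝ (Fin d) →ᵃ[ℝ] ℝ) (x : Fin n → EuclideanSpace ℝ (Fin d))
    (hmargin : ∀ i, γ ≤ ℓ (x i))
    (hcluster : ∀ i j, |ℓ (x i) - ℓ (x j)| ≤ γ / d)
    (a : Fin n → ℝ) (y : EuclideanSpace ℝ (Fin d))
    (hy : y = ∑ i, a i • x i) (ha1 : ∑ i, a i = 1) (ha2 : ∑ i, |a i| ≤ (d : ℝ) + 1) :
    γ / 2 ≤ ℓ y :=
  cluster_sign_transfer_general d n hd γ ℓ x hmargin hcluster a y hy ha1 ha2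
end

section
/- Let n ≥ 1, d ≥ 1 be integers, let x₁, …, xₙ ∈ ℝ^d, let y ∈ ℝ^d, and let κ ≥ 1 be a real number. Then there exists a ∈ ℝⁿ with Σᵢ aᵢ = 1, Σᵢ aᵢ·xᵢ = y, and Σᵢ |aᵢ| ≤ κ if and only if every affine function L : ℝ^d → ℝ satisfies L(y) ≤ ((κ+1)/2)·maxᵢ L(xᵢ) − ((κ−1)/2)·minᵢ L(xᵢ). -/
/-!
If `y = ∑ aᵢ xᵢ` with `∑ aᵢ = 1`, then `L y = ∑ aᵢ L(xᵢ)`; the positive and negative parts of `a`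
have masses `(‖a‖₁ + 1)/2` and `(‖a‖₁ - 1)/2`, which gives the bound with `max` and `min`.

Conversely, the points `∑ aᵢ xᵢ` with admissible weights form a compact convex set. If `y` lies
outside it, a separating functional `g` satisfies `g (∑ aᵢ xᵢ) < g y` for all admissible `a`, in
particular for `a = (κ+1)/2 • eᵢ - (κ-1)/2 • eⱼ` with `g (xᵢ)` maximal and `g (xⱼ)` minimal, and
`g (∑ aᵢ xᵢ)` is then exactly the right-hand side of the inequality.
-/

open Finset

section L1Weights

variable {ι : Type*} [Fintype ι]

def affineWeightsL1Ball (ι : Type*) [Fintype ι] (κ : ℝ) : Set (ι → ℝ) :=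
  {a | ∑ i, a i = 1 ∧ ∑ i, |a i| ≤ κ}

theorem convex_affineWeightsL1Ball (κ : ℝ) : Convex ℝ (affineWeightsL1Ball ι κ) := by
  rintro a ⟨ha, haκ⟩ b ⟨hb, hbκ⟩ s t hs ht hst
  refine ⟨?_, ?_⟩
  · simp only [Pi.add_apply, Pi.smul_apply, smul_eq_mul, sum_add_distrib, ← mul_sum, ha, hb,
      mul_one, hst]
  · calc ∑ i, |(s • a + t • b) i| ≤ ∑ i, (s * |a i| + t * |b i|) := by
          refine sum_le_sum fun i _ => ?_
          simpa [abs_mul, abs_of_nonneg hs, abs_of_nonneg ht] using abs_add_le (s * a i) (t * b i)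
      _ = s * ∑ i, |a i| + t * ∑ i, |b i| := by rw [sum_add_distrib, mul_sum, mul_sum]
      _ ≤ s * κ + t * κ := by gcongr
      _ = κ := by rw [← add_mul, hst, one_mul]

theorem isCompact_affineWeightsL1Ball (κ : ℝ) : IsCompact (affineWeightsL1Ball ι κ) := by
  refine Metric.isCompact_of_isClosed_isBounded ?_ ?_
  · exact (isClosed_eq (f := fun a : ι → ℝ => ∑ i, a i) (by fun_prop) continuous_const).inter
      (isClosed_le (f := fun a : ι → ℝ => ∑ i, |a i|) (by fun_prop) continuous_const)
  · refine (Metric.isBounded_closedBall (x := 0) (r := κ)).subset fun a ⟨_, haκ⟩ => ?_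
    have hle : ∀ i, |a i| ≤ ∑ j, |a j| := fun i =>
      single_le_sum (f := fun j => |a j|) (fun j _ => abs_nonneg _) (mem_univ i)
    rw [mem_closedBall_zero_iff,
      pi_norm_le_iff_of_nonneg ((sum_nonneg fun j _ => abs_nonneg (a j)).trans haκ)]
    exact fun i => (hle i).trans haκ

theorem sub_single_mem_affineWeightsL1Ball [DecidableEq ι] {κ : ℝ} (hκ : 1 ≤ κ) (i j : ι) :
    Pi.single i ((κ + 1) / 2) - Pi.single j ((κ - 1) / 2) ∈ affineWeightsL1Ball ι κ := by
  refine ⟨?_, ?_⟩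
  · simp only [Pi.sub_apply, sum_sub_distrib, sum_pi_single', mem_univ, if_true]
    ring
  · calc ∑ k, |(Pi.single i ((κ + 1) / 2) - Pi.single j ((κ - 1) / 2) : ι → ℝ) k|
        ≤ ∑ k, (|Pi.single i ((κ + 1) / 2) k| + |Pi.single j ((κ - 1) / 2) k|) :=
          sum_le_sum fun k _ => abs_sub _ _
      _ = (κ + 1) / 2 + (κ - 1) / 2 := by
          simp only [sum_add_distrib, Pi.single_apply, apply_ite abs, abs_zero, sum_ite_eq',
            mem_univ, if_true]
          rw [abs_of_nonneg (by linarith), abs_of_nonneg (by linarith)]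
      _ = κ := by ring

theorem sum_mul_le_of_mem_affineWeightsL1Ball {a t : ι → ℝ} {κ m M : ℝ}
    (ha : a ∈ affineWeightsL1Ball ι κ) (hm : ∀ i, m ≤ t i) (hM : ∀ i, t i ≤ M) :
    ∑ i, a i * t i ≤ (κ + 1) / 2 * M - (κ - 1) / 2 * m := by
  obtain ⟨ha1, haκ⟩ := ha
  have hterm : ∀ i, a i * t i ≤ (|a i| + a i) / 2 * M - (|a i| - a i) / 2 * m := fun i => by
    rcases le_total 0 (a i) with h | h
    · rw [abs_of_nonneg h]; nlinarith [mul_le_mul_of_nonneg_left (hM i) h]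
    · rw [abs_of_nonpos h]; nlinarith [mul_le_mul_of_nonpos_left (hm i) h]
  have hne : Nonempty ι := by
    by_contra h
    simp [not_nonempty_iff.mp h] at ha1
  obtain ⟨i₀⟩ := hne
  calc ∑ i, a i * t i ≤ ∑ i, ((|a i| + a i) / 2 * M - (|a i| - a i) / 2 * m) :=
        sum_le_sum fun i _ => hterm i
    _ = (∑ i, |a i| + 1) / 2 * M - (∑ i, |a i| - 1) / 2 * m := by
        simp only [sum_sub_distrib, ← sum_mul, ← sum_div, sum_add_distrib, ha1]
    _ ≤ (κ + 1) / 2 * M - (κ - 1) / 2 * m := by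
        nlinarith [mul_le_mul_of_nonneg_right haκ (sub_nonneg.2 ((hm i₀).trans (hM i₀)))]

theorem exists_dual_lt_of_notMem_image_affineWeightsL1Ball {E : Type*} [NormedAddCommGroup E]
    [NormedSpace ℝ E] {x : ι → E} {y : E} {κ : ℝ}
    (hy : ∀ a ∈ affineWeightsL1Ball ι κ, ∑ i, a i • x i ≠ y) :
    ∃ g : StrongDual ℝ E, ∀ a ∈ affineWeightsL1Ball ι κ, g (∑ i, a i • x i) < g y := by
  have hy' : y ∉ Fintype.linearCombination ℝ x '' affineWeightsL1Ball ι κ := fun ⟨a, ha, hay⟩ =>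
    hy a ha ((Fintype.linearCombination_apply ℝ x a).symm.trans hay)
  have hconvex := (convex_affineWeightsL1Ball κ).linear_image (Fintype.linearCombination ℝ x)
  have hclosed := ((isCompact_affineWeightsL1Ball κ).image
    (LinearMap.continuous_of_finiteDimensional (Fintype.linearCombination ℝ x))).isClosed
  obtain ⟨g, u, hgu, hu⟩ := geometric_hahn_banach_closed_point hconvex hclosed hy'
  exact ⟨g, fun a ha => (hgu _ ⟨a, ha, Fintype.linearCombination_apply ℝ x a⟩).trans hu⟩

end L1Weights

theorem AffineMap.map_sum_smul_of_sum_eq_one_s7 {ι k V₁ V₂ : Type*} [Fintype ι] [Ring k]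
    [AddCommGroup V₁] [Module k V₁] [AddCommGroup V₂] [Module k V₂] (L : V₁ →ᵃ[k] V₂)
    {a : ι → k} (ha : ∑ i, a i = 1) (x : ι → V₁) :
    L (∑ i, a i • x i) = ∑ i, a i • L (x i) := by
  rw [← univ.affineCombination_eq_linear_combination x a ha, univ.map_affineCombination x a ha,
    univ.affineCombination_eq_linear_combination _ a ha, Function.comp_def]

theorem affine_combination_iff_affine_functionals_general (n d : ℕ) (hn : 1 ≤ n)
    (x : Fin n → EuclideanSpace ℝ (Fin d)) (y : EuclideanSpace ℝ (Fin d))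
    (κ : ℝ) (hκ : 1 ≤ κ) :
    (∃ a : Fin n → ℝ,
        (∑ i, a i = 1) ∧ (∑ i, a i • x i = y) ∧ (∑ i, |a i| ≤ κ)) ↔
      (∀ L : EuclideanSpace ℝ (Fin d) →ᵃ[ℝ] ℝ,
        L y ≤ (κ + 1) / 2 *
            Finset.univ.sup' (Finset.univ_nonempty_iff.mpr (Fin.pos_iff_nonempty.mp hn))
              (fun i => L (x i)) -
          (κ - 1) / 2 *
            Finset.univ.inf' (Finset.univ_nonempty_iff.mpr (Fin.pos_iff_nonempty.mp hn))
              (fun i => L (x i))) := by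
  have hne : (univ : Finset (Fin n)).Nonempty := univ_nonempty_iff.mpr (Fin.pos_iff_nonempty.mp hn)
  constructor
  · rintro ⟨a, ha, rfl, haκ⟩ L
    rw [L.map_sum_smul_of_sum_eq_one_s7 ha]
    exact sum_mul_le_of_mem_affineWeightsL1Ball ⟨ha, haκ⟩
      (fun i => inf'_le (fun i => L (x i)) (mem_univ i))
      (fun i => le_sup' (fun i => L (x i)) (mem_univ i))
  · intro hL
    by_contra hy
    obtain ⟨g, hg⟩ := exists_dual_lt_of_notMem_image_affineWeightsL1Ball 
      fun a ⟨ha, haκ⟩ hay => hy ⟨a, ha, hay, haκ⟩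
    obtain ⟨i, -, hi⟩ := exists_mem_eq_sup' hne fun i => g (x i)
    obtain ⟨j, -, hj⟩ := exists_mem_eq_inf' hne fun i => g (x i)
    have hgy := hL g.toLinearMap.toAffineMap
    simp only [LinearMap.coe_toAffineMap, ContinuousLinearMap.coe_coe, hi, hj] at hgy
    have hlt := hg _ (sub_single_mem_affineWeightsL1Ball hκ i j)
    rw [← Fintype.linearCombination_apply, map_sub, Fintype.linearCombination_apply_single,
      Fintype.linearCombination_apply_single, map_sub, map_smul, map_smul, smul_eq_mul,
      smul_eq_mul] at hlt
    linarith

/-- `y` is an affine combination of `x₁,…,xₙ` with coefficient ℓ¹-norm at most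
`κ` if and only if every affine functional `L` satisfies
`L(y) ≤ ((κ+1)/2)·maxᵢ L(xᵢ) − ((κ−1)/2)·minᵢ L(xᵢ)`. -/
theorem affine_combination_iff_affine_functionals (n d : ℕ) (hn : 1 ≤ n) (hd : 1 ≤ d)
    (x : Fin n → EuclideanSpace ℝ (Fin d)) (y : EuclideanSpace ℝ (Fin d))
    (κ : ℝ) (hκ : 1 ≤ κ) :
    (∃ a : Fin n → ℝ,
        (∑ i, a i = 1) ∧ (∑ i, a i • x i = y) ∧ (∑ i, |a i| ≤ κ)) ↔
      (∀ L : EuclideanSpace ℝ (Fin d) →ᵃ[ℝ] ℝ,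
        L y ≤ (κ + 1) / 2 *
            Finset.univ.sup' (Finset.univ_nonempty_iff.mpr (Fin.pos_iff_nonempty.mp hn))
              (fun i => L (x i)) -
          (κ - 1) / 2 *
            Finset.univ.inf' (Finset.univ_nonempty_iff.mpr (Fin.pos_iff_nonempty.mp hn))
              (fun i => L (x i))) :=
  affine_combination_iff_affine_functionals_general n d hn x y κ hκ
end

section
/- Let b ≥ 48 be an even integer, let Z₁, …, Z_b be i.i.d. random variables each uniformly distributed on {1, …, b}, let B ⊆ {1, …, b} be a subset with |B| = b/2, and let Y be the number of indices i ∈ B such that Zⱼ ≠ i for every j ∈ {1, …, b}. Then Var(Y) ≤ b²/64. -/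
/-!
Write the count as `∑ i ∈ B, 1_{E i}`, where `E i` is the event that block `i` stays empty.
By independence `P(E i) = (1 - 1/b)^b` and, for `i ≠ i'`, `P(E i ∩ E i') = (1 - 2/b)^b`, which is
at most `(1 - 1/b)^(2b)` because `1 - 2x ≤ (1 - x)^2`. So the indicators are pairwise negatively
correlated, and the variance of their sum is at most the sum of their variances, each `≤ 1/4`
(Popoviciu). This gives `|B|/4 = b/8 ≤ b^2/64`.
-/

open MeasureTheory ProbabilityTheory Finset

section NegativeCorrelation

variable {Ω ι : Type*} [MeasurableSpace Ω] {μ : Measure Ω}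

lemma variance_sum_le_of_covariance_nonpos [IsFiniteMeasure μ] {s : Finset ι}
    {X : ι → Ω → ℝ} (hX : ∀ i ∈ s, MemLp (X i) 2 μ)
    (hcov : ∀ i ∈ s, ∀ j ∈ s, i ≠ j → cov[X i, X j; μ] ≤ 0) :
    Var[∑ i ∈ s, X i; μ] ≤ ∑ i ∈ s, Var[X i; μ] := by
  classical
  rw [variance_sum' hX]
  refine sum_le_sum fun i hi => ?_
  rw [← add_sum_erase s _ hi, covariance_self (hX i hi).aemeasurable]
  exact add_le_of_nonpos_right <| sum_nonpos fun j hj =>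
    hcov i hi j (mem_of_mem_erase hj) (ne_of_mem_erase hj).symm

lemma memLp_two_indicator_one [IsFiniteMeasure μ] {A : Set Ω} (hA : MeasurableSet A) :
    MemLp (A.indicator (1 : Ω → ℝ)) 2 μ :=
  memLp_indicator_const 2 hA 1 (by simp)

lemma covariance_indicator_one [IsProbabilityMeasure μ] {A B : Set Ω}
    (hA : MeasurableSet A) (hB : MeasurableSet B) :
    cov[A.indicator 1, B.indicator 1; μ] = μ.real (A ∩ B) - μ.real A * μ.real B := by
  rw [covariance_eq_sub (memLp_two_indicator_one hA) (memLp_two_indicator_one hB),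
    ← Set.inter_indicator_one, integral_indicator_one (hA.inter hB), integral_indicator_one hA,
    integral_indicator_one hB]

lemma variance_indicator_one_le [IsProbabilityMeasure μ] {A : Set Ω} (hA : MeasurableSet A) :
    Var[A.indicator 1; μ] ≤ 1 / 4 := by
  have hbound : ∀ ω, A.indicator (1 : Ω → ℝ) ω ∈ Set.Icc 0 1 := fun ω => by
    by_cases h : ω ∈ A <;> simp [h]
  calc Var[A.indicator 1; μ] ≤ ((1 - 0) / 2) ^ 2 :=
        variance_le_sq_of_bounded (.of_forall hbound)
          ((measurable_const.indicator hA).aemeasurable)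
    _ = 1 / 4 := by norm_num

end NegativeCorrelation

lemma one_sub_two_mul_pow_le {x : ℝ} (hx : 0 ≤ 1 - 2 * x) (n : ℕ) :
    (1 - 2 * x) ^ n ≤ (1 - x) ^ n * (1 - x) ^ n := by
  rw [← mul_pow]
  exact pow_le_pow_left₀ hx (by nlinarith [sq_nonneg x]) n

section Slotting

variable {Ω ι α : Type*} [MeasurableSpace Ω] {μ : Measure Ω} [IsProbabilityMeasure μ]
  [MeasurableSpace α] [MeasurableSingletonClass α]

lemma measurableSet_forall_ne [Countable ι] {Z : ι → Ω → α} (hZ : ∀ j, Measurable (Z j))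
    (i : α) : MeasurableSet {ω | ∀ j, Z j ω ≠ i} := by
  simp only [Set.ofPred_forall]
  exact .iInter fun j => (hZ j (measurableSet_singleton i)).compl

variable [Fintype α]

lemma measureReal_preimage_finset_of_uniform {X : Ω → α} (hX : Measurable X)
    (hunif : ∀ i, μ (X ⁻¹' {i}) = (Fintype.card α : ENNReal)⁻¹) (S : Finset α) :
    μ.real (X ⁻¹' S) = #S / Fintype.card α := by
  rw [← sum_measureReal_preimage_singleton S fun i _ => hX (measurableSet_singleton i)]
  simp [measureReal_def, hunif, div_eq_mul_inv]

variable [Fintype ι] {Z : ι → Ω → α}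

lemma measureReal_forall_notMem_of_uniform (hZ : ∀ j, Measurable (Z j))
    (hunif : ∀ j i, μ (Z j ⁻¹' {i}) = (Fintype.card α : ENNReal)⁻¹) (hindep : iIndepFun Z μ)
    (S : Finset α) :
    μ.real {ω | ∀ j, Z j ω ∉ S} = (1 - #S / Fintype.card α) ^ Fintype.card ι := by
  have hset : {ω | ∀ j, Z j ω ∉ S} = ⋂ j, Z j ⁻¹' (↑S)ᶜ := by ext; simp
  have hprod := hindep.meas_iInter (s := fun j => Z j ⁻¹' (↑S)ᶜ)
    fun j => ⟨(↑S)ᶜ, S.measurableSet.compl, rfl⟩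
  rw [hset, measureReal_def, hprod, ENNReal.toReal_prod]
  simp_rw [← measureReal_def, Set.preimage_compl,
    measureReal_compl (hZ _ S.measurableSet), probReal_univ,
    measureReal_preimage_finset_of_uniform (hZ _) (hunif _)]
  simp

lemma measureReal_forall_ne_inter_le (hZ : ∀ j, Measurable (Z j))
    (hunif : ∀ j i, μ (Z j ⁻¹' {i}) = (Fintype.card α : ENNReal)⁻¹) (hindep : iIndepFun Z μ)
    {i i' : α} (hne : i ≠ i') :
    μ.real ({ω | ∀ j, Z j ω ≠ i} ∩ {ω | ∀ j, Z j ω ≠ i'}) ≤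
      μ.real {ω | ∀ j, Z j ω ≠ i} * μ.real {ω | ∀ j, Z j ω ≠ i'} := by
  classical
  have hpair : {ω | ∀ j, Z j ω ≠ i} ∩ {ω | ∀ j, Z j ω ≠ i'} =
      {ω | ∀ j, Z j ω ∉ ({i, i'} : Finset α)} := by
    ext; simp [forall_and]
  have hsingle (k : α) : {ω | ∀ j, Z j ω ≠ k} = {ω | ∀ j, Z j ω ∉ ({k} : Finset α)} := by
    simp
  have htwo : 2 ≤ Fintype.card α := by
    simpa [hne] using card_le_univ ({i, i'} : Finset α)
  have hx : 0 ≤ 1 - 2 * (1 / Fintype.card α : ℝ) := by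
    rw [mul_one_div, sub_nonneg, div_le_one (by positivity)]
    exact_mod_cast htwo
  rw [hpair, hsingle i, hsingle i']
  simp only [measureReal_forall_notMem_of_uniform hZ hunif hindep, card_pair hne, card_singleton]
  simpa [mul_one_div, div_eq_mul_inv] using one_sub_two_mul_pow_le hx (Fintype.card ι)

lemma variance_card_filter_forall_ne_le [DecidableEq α] (hZ : ∀ j, Measurable (Z j))
    (hunif : ∀ j i, μ (Z j ⁻¹' {i}) = (Fintype.card α : ENNReal)⁻¹) (hindep : iIndepFun Z μ)
    (B : Finset α) :
    Var[fun ω => (#{i ∈ B | ∀ j, Z j ω ≠ i} : ℝ); μ] ≤ #B / 4 := by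
  set E : α → Set Ω := fun i => {ω | ∀ j, Z j ω ≠ i}
  have hcount : (fun ω => (#{i ∈ B | ∀ j, Z j ω ≠ i} : ℝ)) = ∑ i ∈ B, (E i).indicator 1 := by
    ext ω
    rw [natCast_card_filter, Finset.sum_apply]
    refine sum_congr rfl fun i _ => ?_
    by_cases h : ∀ j, Z j ω ≠ i <;> simp [h, E]
  have hcov : ∀ i ∈ B, ∀ i' ∈ B, i ≠ i' →
      cov[(E i).indicator 1, (E i').indicator 1; μ] ≤ 0 := fun i _ i' _ hne => by
    rw [covariance_indicator_one (measurableSet_forall_ne hZ i) (measurableSet_forall_ne hZ i')]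
    exact sub_nonpos.2 (measureReal_forall_ne_inter_le hZ hunif hindep hne)
  calc Var[fun ω => (#{i ∈ B | ∀ j, Z j ω ≠ i} : ℝ); μ]
      ≤ ∑ i ∈ B, Var[(E i).indicator 1; μ] := by
        rw [hcount]
        exact variance_sum_le_of_covariance_nonpos
          (fun i _ => memLp_two_indicator_one (measurableSet_forall_ne hZ i)) hcov
    _ ≤ ∑ _i ∈ B, 1 / 4 :=
        sum_le_sum fun i _ => variance_indicator_one_le (measurableSet_forall_ne hZ i)
    _ = #B / 4 := by simp [div_eq_mul_inv]

end Slotting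

theorem slotting_variance_general {Ω : Type*} [MeasurableSpace Ω] (μ : Measure Ω)
    [IsProbabilityMeasure μ] (b : ℕ) (hb : 48 ≤ b)
    (Z : Fin b → Ω → Fin b) (hmeas : ∀ j, Measurable (Z j))
    (hunif : ∀ j i, μ (Z j ⁻¹' {i}) = (b : ENNReal)⁻¹)
    (hindep : iIndepFun Z μ)
    (B : Finset (Fin b)) (hB : B.card = b / 2) :
    variance (fun ω => (((B.filter (fun i => ∀ j, Z j ω ≠ i)).card : ℝ))) μ ≤
      (b : ℝ) ^ 2 / 64 := by
  have hB' : (#B : ℝ) ≤ b / 2 := by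
    rw [hB]
    exact Nat.cast_div_le
  have hb' : (48 : ℝ) ≤ b := by exact_mod_cast hb
  calc Var[fun ω => (#{i ∈ B | ∀ j, Z j ω ≠ i} : ℝ); μ] ≤ (#B : ℝ) / 4 := by
        -- `convert` reconciles the `Nat.decidableForallFin` instance of the statement's filter
        -- with the `Fintype.decidableForallFintype` one of the general lemma.
        convert variance_card_filter_forall_ne_le hmeas (by simpa using hunif) hindep B
    _ ≤ (b : ℝ) ^ 2 / 64 := by nlinarith

/-- Throwing `b ≥ 48` points i.i.d. uniformly into `b` blocks, the variance of
the number of empty blocks among a designated half `B` is at most `b²/64`. -/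
theorem slotting_variance {Ω : Type*} [MeasurableSpace Ω] (μ : Measure Ω)
    [IsProbabilityMeasure μ] (b : ℕ) (hb : 48 ≤ b) (hbe : Even b)
    (Z : Fin b → Ω → Fin b) (hmeas : ∀ j, Measurable (Z j))
    (hunif : ∀ j i, μ (Z j ⁻¹' {i}) = (b : ENNReal)⁻¹)
    (hindep : iIndepFun Z μ)
    (B : Finset (Fin b)) (hB : B.card = b / 2) :
    variance (fun ω => (((B.filter (fun i => ∀ j, Z j ω ≠ i)).card : ℝ))) μ ≤
      (b : ℝ) ^ 2 / 64 :=
  slotting_variance_general μ b hb Z hmeas hunif hindep B hB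
end

section
/- Let λ be a real number with 0 < λ ≤ 1/2, let σ_c ≥ 0 and σ_f ≥ 1 be integers, and let X₁, …, X_{σ_c}, Y₁, …, Y_{σ_f} be independent random variables taking values in {0,1} with E[Xᵢ] = 1/2 for every i and E[Yⱼ] = 1/2 + λ for every j. Then Pr[Σᵢ Xᵢ + Σⱼ Yⱼ ≤ (σ_c + σ_f)/2] ≤ exp(−λ²·σ_f²/(2·σ_f + σ_c)). -/
open MeasureTheory ProbabilityTheory

/-!
Hoeffding's inequality suffices, with room to spare. The sum `∑ Xᵢ + ∑ Yⱼ` of `n = σc + σf`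
independent `[0,1]`-valued variables has mean `(σc + σf)/2 + λσf`, so the event in question is a
deviation of `λσf` below the mean, of probability at most `exp(-2λ²σf²/n)`; and
`n ≤ 2(2σf + σc)`.
-/

lemma measureReal_sum_le_sum_integral_sub_le {Ω ι : Type*} [MeasurableSpace Ω] [Fintype ι]
    {μ : Measure Ω} {Z : ι → Ω → ℝ} (hindep : iIndepFun Z μ)
    (hmeas : ∀ i, AEMeasurable (Z i) μ) {a b : ℝ} (hab : ∀ i, ∀ᵐ ω ∂μ, Z i ω ∈ Set.Icc a b)
    {ε : ℝ} (hε : 0 ≤ ε) :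
    μ.real {ω | ∑ i, Z i ω ≤ ∑ i, μ[Z i] - ε} ≤
      Real.exp (-(2 * ε ^ 2 / (Fintype.card ι * (b - a) ^ 2))) := by
  have := hindep.isProbabilityMeasure
  have hsub : ∀ i, HasSubgaussianMGF (fun ω ↦ μ[Z i] - Z i ω) ((‖b - a‖₊ / 2) ^ 2) μ :=
    fun i ↦ (hasSubgaussianMGF_of_mem_Icc (hmeas i) (hab i)).neg.congr
      (ae_of_all _ fun ω ↦ by simp)
  have hindep' : iIndepFun (fun i ω ↦ μ[Z i] - Z i ω) μ :=
    hindep.comp (fun i y ↦ (∫ ω, Z i ω ∂μ) - y) fun _ ↦ measurable_const.sub measurable_id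
  convert HasSubgaussianMGF.measure_sum_ge_le_of_iIndepFun hindep' (s := Finset.univ)
    (fun i _ ↦ hsub i) hε using 3
  · ext ω
    simp only [Finset.sum_sub_distrib]
    constructor <;> intro hω <;> linarith
  · push_cast
    simp only [Finset.sum_const, Finset.card_univ, nsmul_eq_mul]
    rw [Real.norm_eq_abs, div_pow, sq_abs]
    generalize (b - a) ^ 2 = d
    ring

theorem mle_far_comparison_bound_general {Ω : Type*} [MeasurableSpace Ω] (μ : Measure Ω)
    [IsProbabilityMeasure μ] (lam : ℝ) (hlam0 : 0 < lam)
    (σc σf : ℕ) (hσf : 1 ≤ σf)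
    (X : Fin σc → Ω → ℝ) (Y : Fin σf → Ω → ℝ)
    (hXmeas : ∀ i, Measurable (X i)) (hYmeas : ∀ j, Measurable (Y j))
    (hX01 : ∀ i ω, X i ω = 0 ∨ X i ω = 1) (hY01 : ∀ j ω, Y j ω = 0 ∨ Y j ω = 1)
    (hindep : iIndepFun (Sum.elim X Y) μ)
    (hXmean : ∀ i, (∫ ω, X i ω ∂μ) = 1 / 2)
    (hYmean : ∀ j, (∫ ω, Y j ω ∂μ) = 1 / 2 + lam) :
    μ {ω | ∑ i, X i ω + ∑ j, Y j ω ≤ ((σc : ℝ) + σf) / 2} ≤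
      ENNReal.ofReal (Real.exp (-(lam ^ 2 * (σf : ℝ) ^ 2 / (2 * σf + σc)))) := by
  set Z := Sum.elim X Y
  have hmeas : ∀ k, AEMeasurable (Z k) μ := by
    rintro (i | j) <;> [exact (hXmeas i).aemeasurable; exact (hYmeas j).aemeasurable]
  have h01 : ∀ k, ∀ᵐ ω ∂μ, Z k ω ∈ Set.Icc (0 : ℝ) 1 := by
    rintro (i | j) <;> refine ae_of_all _ fun ω ↦ ?_
    · rcases hX01 i ω with h | h <;> simp [Z, h]
    · rcases hY01 j ω with h | h <;> simp [Z, h]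
  have hmean : ∑ k, μ[Z k] - lam * σf = ((σc : ℝ) + σf) / 2 := by
    simp only [Fintype.sum_sum_type, Z, Sum.elim_inl, Sum.elim_inr, hXmean, hYmean,
      Finset.sum_const, Finset.card_univ, Fintype.card_fin, nsmul_eq_mul]
    ring
  have hoeffding := measureReal_sum_le_sum_integral_sub_le hindep hmeas h01
    (by positivity : 0 ≤ lam * σf)
  rw [hmean] at hoeffding
  simp only [Fintype.sum_sum_type, Z, Sum.elim_inl, Sum.elim_inr, Fintype.card_sum,
    Fintype.card_fin, Nat.cast_add, sub_zero, one_pow, mul_one] at hoeffding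
  rw [← ofReal_measureReal]
  refine ENNReal.ofReal_le_ofReal (hoeffding.trans (Real.exp_le_exp.mpr ?_))
  rw [neg_le_neg_iff, div_le_div_iff₀ (by positivity) (by positivity)]
  nlinarith [mul_nonneg (sq_nonneg (lam * σf)) (by positivity : (0 : ℝ) ≤ 3 * σf + σc)]

/-- An ordering disagreeing with the true order on `σ_c` λ-close comparisons
(correct with probability exactly `1/2`) and `σ_f` λ-far comparisons (correct with
probability exactly `1/2 + λ`) beats the true order on at least half of the differing
comparisons with probability at most `exp(−λ²σ_f²/(2σ_f + σ_c))`. -/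
theorem mle_far_comparison_bound {Ω : Type*} [MeasurableSpace Ω] (μ : Measure Ω)
    [IsProbabilityMeasure μ] (lam : ℝ) (hlam0 : 0 < lam) (hlam1 : lam ≤ 1 / 2)
    (σc σf : ℕ) (hσf : 1 ≤ σf)
    (X : Fin σc → Ω → ℝ) (Y : Fin σf → Ω → ℝ)
    (hXmeas : ∀ i, Measurable (X i)) (hYmeas : ∀ j, Measurable (Y j))
    (hX01 : ∀ i ω, X i ω = 0 ∨ X i ω = 1) (hY01 : ∀ j ω, Y j ω = 0 ∨ Y j ω = 1)
    (hindep : iIndepFun (Sum.elim X Y) μ)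
    (hXmean : ∀ i, (∫ ω, X i ω ∂μ) = 1 / 2)
    (hYmean : ∀ j, (∫ ω, Y j ω ∂μ) = 1 / 2 + lam) :
    μ {ω | ∑ i, X i ω + ∑ j, Y j ω ≤ ((σc : ℝ) + σf) / 2} ≤
      ENNReal.ofReal (Real.exp (-(lam ^ 2 * (σf : ℝ) ^ 2 / (2 * σf + σc)))) :=
  mle_far_comparison_bound_general μ lam hlam0 σc σf hσf X Y hXmeas hYmeas hX01 hY01 hindep hXmean
    hYmean
end
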